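/- Fix n ≥ 1, an initial sorted age vector v₀ : Fin n → ℝ (nonincreasing, nonnegative entries), action types (c_k)_{k≥1} (each 'poll' or 'send'), positive durations (z_k)_{k≥1}, and rank sequences (j_k) and the constant rank 0 sequence (maximum-age-first), yielding gateway trajectories (v_k) and (u_k) as in the coupled evolution, both starting at v₀. Let t_k = z_1 + ⋯ + z_k (t₀ = 0) be the completion times. Define the monitor age vector m^v(t) for the trajectory (v_k): m^v(0) = v₀, and for t > 0, m^v_i(t) = v_K i + (t − t_K), where t_K is the largest completion time t_K ≤ t such that c_K = send (and m^v_i(t) = v₀ i + t if no send has completed by time t); define m^u analogously from (u_k). Then for every t ≥ 0 and every i : Fin n, m^u_i(t) ≤ m^v_i(t). -/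

import Mathlib

/-- The two kinds of actions the gateway can take: poll a sensor, or send to the monitor. -/
inductive GWAction
  | poll : GWAction
  | send : GWAction
deriving DecidableEq

/-- The poll update of an ordered age vector `v` with rank `j` and duration `z`. -/
def pollUpdate {n : ℕ} (v : Fin n → ℝ) (j : Fin n) (z : ℝ) : Fin n → ℝ := fun i =>
  if h : (i : ℕ) + 1 < n then
    (if (i : ℕ) < (j : ℕ) then v i + z else v ⟨(i : ℕ) + 1, h⟩ + z)
  else z

/-- The gateway age trajectory: starting from `v₀`, at step `k ≥ 1` apply the poll
update with rank `j k` and duration `z k` if `c k = poll`, and the send update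
(all ages increase by `z k`) if `c k = send`. -/
def traj {n : ℕ} (v₀ : Fin n → ℝ) (c : ℕ → GWAction) (z : ℕ → ℝ) (j : ℕ → Fin n) :
    ℕ → Fin n → ℝ
  | 0 => v₀
  | k + 1 =>
    match c (k + 1) with
    | GWAction.poll => pollUpdate (traj v₀ c z j k) (j (k + 1)) (z (k + 1))
    | GWAction.send => fun i => traj v₀ c z j k i + z (k + 1)

/-- `complTime z k = z 1 + ⋯ + z k` is the completion time of the `k`-th transmission
(`complTime z 0 = 0`). -/
def complTime (z : ℕ → ℝ) (k : ℕ) : ℝ := ∑ l ∈ Finset.range k, z (l + 1)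

/-- The index of the last send action whose transmission has completed by time `t`
(`0` if no send has completed by time `t`). -/
noncomputable def lastSendIdx (c : ℕ → GWAction) (z : ℕ → ℝ) (t : ℝ) : ℕ :=
  sSup {K : ℕ | 1 ≤ K ∧ c K = GWAction.send ∧ complTime z K ≤ t}

/-- The age of sensor `i` at the monitor at time `t`: the gateway age of sensor `i` at
the last completed send, plus the time elapsed since that completion (before the first
completed send this is `v₀ i + t`, since `traj … 0 = v₀` and `complTime z 0 = 0`). -/
noncomputable def monitorAge {n : ℕ} (v₀ : Fin n → ℝ) (c : ℕ → GWAction) (z : ℕ → ℝ)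
    (j : ℕ → Fin n) (t : ℝ) (i : Fin n) : ℝ :=
  traj v₀ c z j (lastSendIdx c z t) i + (t - complTime z (lastSendIdx c z t))

lemma pollUpdate_nonneg {n : ℕ} (v : Fin n → ℝ) (hv : ∀ i, 0 ≤ v i) (j : Fin n)
    (z : ℝ) (hz : 0 ≤ z) : ∀ i, 0 ≤ pollUpdate v j z i := by
  intro i
  unfold pollUpdate
  split
  · split
    · have := hv i; linarith
    · next h _ => have := hv ⟨(i:ℕ)+1,h⟩; linarith
  · exact hz

lemma pollUpdate_antitone {n : ℕ} (hn : 1 ≤ n) (v : Fin n → ℝ) (hv : Antitone v)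
    (hnn : ∀ i, 0 ≤ v i) (z : ℝ) (hz : 0 ≤ z) :
    Antitone (pollUpdate v ⟨0, hn⟩ z) := by
  intro a b hab
  unfold pollUpdate
  simp only [Nat.not_lt_zero, if_false]
  by_cases hb : (b : ℕ) + 1 < n
  · have ha : (a : ℕ) + 1 < n := lt_of_le_of_lt (by exact_mod_cast Nat.add_le_add_right hab 1) hb
    rw [dif_pos hb, dif_pos ha]
    exact add_le_add_left (hv (show (⟨(a : ℕ) + 1, ha⟩ : Fin n) ≤ ⟨(b : ℕ) + 1, hb⟩ from Fin.le_def.mpr (Nat.add_le_add_right (Fin.le_def.mp hab) 1))) z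
  · rw [dif_neg hb]
    by_cases ha : (a : ℕ) + 1 < n
    · rw [dif_pos ha]; have := hnn ⟨(a : ℕ) + 1, ha⟩; linarith
    · rw [dif_neg ha]

lemma pollUpdate_le {n : ℕ} (hn : 1 ≤ n) (u v : Fin n → ℝ) (hu : Antitone u)
    (huv : ∀ i, u i ≤ v i) (j : Fin n) (z : ℝ) :
    ∀ i, pollUpdate u ⟨0, hn⟩ z i ≤ pollUpdate v j z i := by
  intro i
  unfold pollUpdate
  simp only [Nat.not_lt_zero, if_false]
  by_cases h : (i : ℕ) + 1 < n
  · rw [dif_pos h, dif_pos h]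
    split
    · have h1 : u ⟨(i : ℕ) + 1, h⟩ ≤ u i := hu (Fin.le_def.mpr (Nat.le_succ _))
      have := huv i; linarith
    · have := huv ⟨(i : ℕ) + 1, h⟩; linarith
  · rw [dif_neg h, dif_neg h]

lemma traj_invariant (n : ℕ) (hn : 1 ≤ n) (v₀ : Fin n → ℝ)
    (hv₀_sorted : Antitone v₀) (hv₀_nonneg : ∀ i, 0 ≤ v₀ i)
    (c : ℕ → GWAction) (z : ℕ → ℝ) (hz : ∀ k, 1 ≤ k → 0 < z k)
    (j : ℕ → Fin n) : ∀ k,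
    Antitone (traj v₀ c z (fun _ => ⟨0, hn⟩) k) ∧
    (∀ i, 0 ≤ traj v₀ c z (fun _ => ⟨0, hn⟩) k i) ∧
    (∀ i, 0 ≤ traj v₀ c z j k i) ∧
    (∀ i, traj v₀ c z (fun _ => ⟨0, hn⟩) k i ≤ traj v₀ c z j k i) := by
  intro k
  induction k with
  | zero => exact ⟨hv₀_sorted, hv₀_nonneg, hv₀_nonneg, fun i => le_refl _⟩
  | succ k ih =>
    obtain ⟨hA, hU, hV, hUV⟩ := ih
    have hzk : 0 ≤ z (k + 1) := (hz (k + 1) (Nat.le_add_left 1 k)).le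
    show _ ∧ _
    cases hc : c (k + 1) <;> simp only [traj, hc]
    · exact ⟨pollUpdate_antitone hn _ hA hU _ hzk,
        pollUpdate_nonneg _ hU _ _ hzk,
        pollUpdate_nonneg _ hV _ _ hzk,
        pollUpdate_le hn _ _ hA hUV _ _⟩
    · refine ⟨fun a b hab => by have := hA hab; dsimp only; linarith,
        fun i => by have := hU i; linarith,
        fun i => by have := hV i; linarith,
        fun i => by have := hUV i; linarith⟩

/-- Deterministic sample-path form of Theorem 1: with a common initial sorted age vector,
common action types and common positive durations, maximum-age-first polling (constant
rank 0) yields pointwise smaller ordered monitor ages at all times `t ≥ 0`. -/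
theorem maf_monitorAge_dominates
    (n : ℕ) (hn : 1 ≤ n) (v₀ : Fin n → ℝ)
    (hv₀_sorted : Antitone v₀) (hv₀_nonneg : ∀ i, 0 ≤ v₀ i)
    (c : ℕ → GWAction) (z : ℕ → ℝ) (hz : ∀ k, 1 ≤ k → 0 < z k)
    (j : ℕ → Fin n) :
    ∀ t : ℝ, 0 ≤ t → ∀ i : Fin n,
      monitorAge v₀ c z (fun _ => ⟨0, hn⟩) t i ≤ monitorAge v₀ c z j t i := by
  intro t ht i
  unfold monitorAge
  have := (traj_invariant n hn v₀ hv₀_sorted hv₀_nonneg c z hz j (lastSendIdx c z t)).2.2.2 i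
  linarith
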